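/- (Corbett) For every n ≥ 2, the reuse sequence C_n is a Hamilton sequence for the rotator graph PR_n. -/

import Mathlib

open Equiv

/-- The prefix-rotation `σ_r = (1 2 ⋯ r)` of positions, 0-indexed as a
permutation of `Fin n` (it sends position `i` to `i+1` for `i < r-1`,
sends position `r-1` to `0`, and fixes all positions `≥ r`). -/
def sigmaRot (n r : ℕ) : Equiv.Perm (Fin n) :=
  if h : r - 1 < n then Fin.cycleRange ⟨r - 1, h⟩ else 1

/-- The permutation `σ_{r₁}σ_{r₂}⋯σ_{r_i}` (composed left-to-right) given by the
first `i` entries of the sequence `S`. -/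
def partialProd (n : ℕ) (S : List ℕ) (i : ℕ) : Equiv.Perm (Fin n) :=
  ((S.take i).map (sigmaRot n)).prod

/-- `S` is a Hamilton sequence for the restricted rotator graph `RR_n(R)`. -/
def IsHamiltonSeq (n : ℕ) (R : Set ℕ) (S : List ℕ) : Prop :=
  S.length = Nat.factorial n ∧
  (∀ r ∈ S, r ∈ R) ∧
  (∀ i < Nat.factorial n, ∀ j < Nat.factorial n,
      partialProd n S i = partialProd n S j → i = j) ∧
  partialProd n S S.length = 1

/-- The value (0-indexed symbol) at the last position of the string `a`;
the one-line-notation symbol there is `lastVal a + 1`. -/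
def lastVal {n : ℕ} (a : Equiv.Perm (Fin n)) : ℕ :=
  if h : 0 < n then ((a ⟨n - 1, Nat.sub_lt h Nat.one_pos⟩ : Fin n) : ℕ) else 0

/-- Arc relation of the restricted incomplete rotator graph `RIR_n(R,m)`:
both endpoints have last symbol `≤ m` and `b = a·σ_r` for some `r ∈ R`. -/
def RIRAdj (n m : ℕ) (R : Set ℕ) (a b : Equiv.Perm (Fin n)) : Prop :=
  lastVal a < m ∧ lastVal b < m ∧ ∃ r ∈ R, b = a * sigmaRot n r

/-- `RIR_n(R,m)` is strongly connected. -/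
def StronglyConnectedRIR (n m : ℕ) (R : Set ℕ) : Prop :=
  ∀ a b : Equiv.Perm (Fin n), lastVal a < m → lastVal b < m →
    Relation.ReflTransGen (RIRAdj n m R) a b

/-- The reuse operation: replace each entry `r` by `n,…,n,n+1-r` (`n-1` copies of `n`). -/
def reuseOp (n : ℕ) (S : List ℕ) : List ℕ :=
  (S.map (fun r => List.replicate (n - 1) n ++ [n + 1 - r])).flatten

/-- Corbett's reuse sequences: `C₁ = (1)` and `C_k = reuse_k(C_{k-1})`. -/
def corbettC : ℕ → List ℕ
  | 0 => []
  | 1 => [1]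
  | k + 2 => reuseOp (k + 2) (corbettC (k + 1))

/-- The recycle operation: replace each entry `r` by
`n, n, n-1, …, n-1, n, …, n` (`r-1` copies of `n-1`, then `n-r-1` copies of `n`). -/
def recycleOp (n : ℕ) (S : List ℕ) : List ℕ :=
  (S.map (fun r => n :: n :: (List.replicate (r - 1) (n - 1) ++ List.replicate (n - r - 1) n))).flatten

/-- The canonical recycle sequences: `D₁ = (1)` and `D_k = recycle_k(D_{k-1})`. -/
def recycleD : ℕ → List ℕ
  | 0 => []
  | 1 => [1]
  | k + 2 => recycleOp (k + 2) (recycleD (k + 1))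

/-- The rewind operation `rewind_m(S)` (with `S = T, n-1, n-1`):
`(T,n-1,n)`, then `m-2` copies of `(T,n)`, then `(T,n-1,n)`, then `m-2` copies of `n`. -/
def rewindOp (n m : ℕ) (S : List ℕ) : List ℕ :=
  (S.dropLast.dropLast ++ [n - 1, n])
    ++ (List.replicate (m - 2) (S.dropLast.dropLast ++ [n])).flatten
    ++ (S.dropLast.dropLast ++ [n - 1, n])
    ++ List.replicate (m - 2) n

/-- The canonical rewind sequences: `W₂ = (2,2)` and `W_k = rewind_k(W_{k-1})`. -/
def rewindW : ℕ → List ℕ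
  | 0 => []
  | 1 => []
  | 2 => [2, 2]
  | k + 3 => rewindOp (k + 3) (k + 3) (rewindW (k + 2))

/-- `S` is a Hamilton sequence for the restricted incomplete rotator graph `RIR_n(R,m)`,
starting from the string `n n-1 ⋯ 1` (which is `Fin.revPerm`). -/
def IsHamiltonSeqRIR (n m : ℕ) (R : Set ℕ) (S : List ℕ) : Prop :=
  S.length = m * Nat.factorial (n - 1) ∧
  (∀ r ∈ S, r ∈ R) ∧
  (∀ i < S.length, ∀ j < S.length,
      Fin.revPerm * partialProd n S i = Fin.revPerm * partialProd n S j → i = j) ∧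
  {b : Equiv.Perm (Fin n) | ∃ i < S.length, b = Fin.revPerm * partialProd n S i}
    = {b : Equiv.Perm (Fin n) | lastVal b < m} ∧
  Fin.revPerm * partialProd n S S.length = Fin.revPerm

/-- The cyclic shift `shift²` moving the first two entries to the end. -/
def shift2 (S : List ℕ) : List ℕ := S.drop 2 ++ S.take 2

/-!
Write `c = σ_{n+1}` for the full rotation and `ρ` for the reversal of positions. Each block
`n+1, …, n+1, n+2-r` of `reuse_{n+1}` multiplies out to `c^n σ_{n+2-r} = ρ σ_r ρ`, so after `k`
blocks and `j ≤ n` further steps the partial product is `ρ T_k ρ c^j`, where `T_k ∈ S_n ⊆ S_{n+1}`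
is the `k`-th partial product of `C_n`. Since `ρ T_k ρ` fixes the first position, `j` is recovered
from where the inverse sends that position, and then `T_k` by cancelling; so distinctness and
closure for `C_{n+1}` follow from those for `C_n`. The induction starts from `C_1 = (1)`, a
Hamilton sequence for `RR_1({1})`.
-/

theorem coe_sigmaRot_apply {N r : ℕ} (hr : r ≤ N) (x : Fin N) :
    (sigmaRot N r x : ℕ) =
      if (x : ℕ) + 1 < r then (x : ℕ) + 1 else if (x : ℕ) + 1 = r then 0 else (x : ℕ) := by
  have h : r - 1 < N := by have := x.isLt; omega
  rw [sigmaRot, dif_pos h]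
  rcases le_or_gt x ⟨r - 1, h⟩ with hle | hgt
  · rw [Fin.coe_cycleRange_of_le hle]
    simp only [Fin.ext_iff, Fin.le_def] at hle ⊢
    split_ifs <;> omega
  · rw [Fin.cycleRange_of_gt hgt]
    simp only [Fin.lt_def] at hgt
    split_ifs <;> omega

theorem sigmaRot_self (n : ℕ) : sigmaRot (n + 1) (n + 1) = finRotate (n + 1) := by
  rw [sigmaRot, dif_pos (by omega), ← Fin.cycleRange_last]
  rfl

open Fin.NatCast in
theorem finRotate_succ_pow_apply (n j : ℕ) (x : Fin (n + 1)) :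
    (finRotate (n + 1) ^ j) x = x + (Nat.cast j : Fin (n + 1)) := by
  induction j with
  | zero => simp
  | succ j ih => rw [pow_succ', Perm.mul_apply, ih, finRotate_apply, Nat.cast_succ, add_assoc]

open Fin.NatCast in
theorem finRotate_succ_pow_self (n : ℕ) : finRotate (n + 1) ^ n = (finRotate (n + 1))⁻¹ := by
  refine eq_inv_of_mul_eq_one_left (Equiv.ext fun x => ?_)
  rw [← pow_succ, finRotate_succ_pow_apply, Fin.natCast_self, add_zero, Perm.one_apply]

theorem revPerm_inv (n : ℕ) : (Fin.revPerm : Perm (Fin n))⁻¹ = Fin.revPerm :=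
  Fin.revPerm_symm

/-- Reversal conjugates `σ_r` into the rotation of the last `r` positions; up to one full
rotation this is `σ_{n+2-r}`. -/
theorem finRotate_pow_mul_sigmaRot {n r : ℕ} (hr1 : 1 ≤ r) (hr : r ≤ n + 1) :
    finRotate (n + 1) ^ n * sigmaRot (n + 1) (n + 2 - r) =
      Fin.revPerm * sigmaRot (n + 1) r * Fin.revPerm := by
  refine Equiv.ext fun x => Fin.ext ?_
  simp only [finRotate_succ_pow_self, Perm.mul_apply, Perm.inv_def, finRotate_symm_apply,
    Fin.coe_sub_one, Fin.ext_iff, Fin.revPerm_apply, Fin.val_rev, Fin.val_zero,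
    coe_sigmaRot_apply hr, coe_sigmaRot_apply (show n + 2 - r ≤ n + 1 by omega)]
  have := x.isLt
  grind

def permCastSucc (n : ℕ) : Perm (Fin n) →* Perm (Fin (n + 1)) :=
  Perm.extendDomainHom Fin.castSuccEmb.toEquivRange

theorem permCastSucc_apply_castSucc {n : ℕ} (σ : Perm (Fin n)) (x : Fin n) :
    permCastSucc n σ x.castSucc = (σ x).castSucc :=
  Perm.extendDomain_apply_image σ Fin.castSuccEmb.toEquivRange x

theorem permCastSucc_apply_last {n : ℕ} (σ : Perm (Fin n)) :
    permCastSucc n σ (Fin.last n) = Fin.last n := by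
  refine Perm.extendDomain_apply_not_subtype σ _ ?_
  rintro ⟨x, hx⟩
  exact (Fin.castSucc_lt_last x).ne hx

theorem permCastSucc_injective (n : ℕ) : Function.Injective (permCastSucc n) :=
  Perm.extendDomainHom_injective _

theorem sigmaRot_succ_of_le {n r : ℕ} (hr : r ≤ n) :
    sigmaRot (n + 1) r = permCastSucc n (sigmaRot n r) := by
  ext x
  induction x using Fin.lastCases with
  | last =>
    rw [permCastSucc_apply_last, coe_sigmaRot_apply (by omega)]
    simp only [Fin.val_last]
    split_ifs <;> omega
  | cast x =>
    rw [permCastSucc_apply_castSucc, Fin.val_castSucc, coe_sigmaRot_apply (by omega),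
      coe_sigmaRot_apply hr, Fin.val_castSucc]

theorem partialProd_succ_of_le {n : ℕ} {S : List ℕ} (hS : ∀ r ∈ S, r ≤ n) (k : ℕ) :
    partialProd (n + 1) S k = permCastSucc n (partialProd n S k) := by
  rw [partialProd, partialProd, map_list_prod, List.map_map]
  congr 1
  exact List.map_congr_left fun r hr => sigmaRot_succ_of_le (hS r (List.mem_of_mem_take hr))

theorem reuseOp_append (n : ℕ) (A B : List ℕ) :
    reuseOp n (A ++ B) = reuseOp n A ++ reuseOp n B := by
  simp [reuseOp]

theorem reuseOp_cons (n r : ℕ) (S : List ℕ) :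
    reuseOp n (r :: S) = List.replicate (n - 1) n ++ [n + 1 - r] ++ reuseOp n S := by
  simp [reuseOp]

theorem length_reuseOp (n : ℕ) (S : List ℕ) :
    (reuseOp (n + 1) S).length = S.length * (n + 1) := by
  induction S with
  | nil => simp [reuseOp]
  | cons r S ih =>
    simp only [reuseOp_cons, List.length_append, List.length_replicate, ih,
      Nat.add_sub_cancel, List.length_cons, List.length_nil]
    ring

theorem mem_of_mem_reuseOp {n r : ℕ} {S : List ℕ} (hS : ∀ s ∈ S, 1 ≤ s ∧ s ≤ n)
    (hr : r ∈ reuseOp (n + 1) S) : 2 ≤ r ∧ r ≤ n + 1 := by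
  simp only [reuseOp, List.mem_flatten, List.mem_map] at hr
  obtain ⟨_, ⟨s, hs, rfl⟩, hr⟩ := hr
  have := hS s hs
  simp only [List.mem_append, List.mem_replicate, List.mem_singleton] at hr
  omega

theorem prod_map_sigmaRot_reuseOp {n : ℕ} {S : List ℕ} (hS : ∀ r ∈ S, 1 ≤ r ∧ r ≤ n + 1) :
    ((reuseOp (n + 1) S).map (sigmaRot (n + 1))).prod =
      Fin.revPerm * (S.map (sigmaRot (n + 1))).prod * Fin.revPerm := by
  have hconj : ∀ P : Perm (Fin (n + 1)),
      Fin.revPerm * P * Fin.revPerm = MulAut.conj Fin.revPerm P :=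
    fun P => by rw [MulAut.conj_apply, revPerm_inv]
  rw [hconj, map_list_prod, reuseOp, List.map_flatten, List.prod_flatten]
  simp only [List.map_map]
  congr 1
  refine List.map_congr_left fun r hr => ?_
  obtain ⟨hr1, hr2⟩ := hS r hr
  simp only [Function.comp_apply, List.map_append, List.prod_append, List.map_replicate,
    List.prod_replicate, List.map_singleton, List.prod_singleton, MulAut.conj_apply, revPerm_inv,
    Nat.add_sub_cancel, sigmaRot_self, show n + 1 + 1 - r = n + 2 - r by omega]
  exact finRotate_pow_mul_sigmaRot hr1 hr2

theorem partialProd_reuseOp {n k j : ℕ} {S : List ℕ} (hS : ∀ r ∈ S, 1 ≤ r ∧ r ≤ n + 1)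
    (hk : k < S.length) (hj : j ≤ n) :
    partialProd (n + 1) (reuseOp (n + 1) S) (k * (n + 1) + j) =
      Fin.revPerm * partialProd (n + 1) S k * Fin.revPerm * finRotate (n + 1) ^ j := by
  have hsplit : reuseOp (n + 1) S = reuseOp (n + 1) (S.take k) ++
      (List.replicate n (n + 1) ++ ([n + 2 - S[k]] ++ reuseOp (n + 1) (S.drop (k + 1)))) := by
    conv_lhs => rw [← List.take_append_drop k S]
    rw [reuseOp_append, List.drop_eq_getElem_cons hk, reuseOp_cons]
    simp
  have hlen : (reuseOp (n + 1) (S.take k)).length = k * (n + 1) := by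
    rw [length_reuseOp, List.length_take_of_le hk.le]
  rw [partialProd, hsplit, ← hlen, List.take_length_add_append,
    List.take_append_of_le_length (by simpa using hj), List.take_replicate, min_eq_left hj,
    List.map_append, List.prod_append, prod_map_sigmaRot_reuseOp
      fun r hr => hS r (List.mem_of_mem_take hr),
    List.map_replicate, List.prod_replicate, sigmaRot_self, partialProd]

theorem revPerm_mul_permCastSucc_mul_revPerm_apply_zero {n : ℕ} (σ : Perm (Fin n)) :
    (Fin.revPerm * permCastSucc n σ * Fin.revPerm : Perm (Fin (n + 1))) 0 = 0 := by
  simp only [Perm.mul_apply, Fin.revPerm_apply, Fin.rev_zero, permCastSucc_apply_last,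
    Fin.rev_last]

open Fin.NatCast in
/-- Right cosets of the stabiliser of `0` are told apart by where the inverse sends `0`. -/
theorem eq_and_eq_of_mul_finRotate_pow_eq {n j j' : ℕ} {A B : Perm (Fin (n + 1))}
    (hA : A 0 = 0) (hB : B 0 = 0) (hj : j ≤ n) (hj' : j' ≤ n)
    (h : A * finRotate (n + 1) ^ j = B * finRotate (n + 1) ^ j') : A = B ∧ j = j' := by
  have inv_apply_zero : ∀ {C : Perm (Fin (n + 1))}, C 0 = 0 → ∀ i : ℕ,
      (C * finRotate (n + 1) ^ i)⁻¹ 0 = -(i : Fin (n + 1)) := fun hC i => by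
    rw [Perm.inv_eq_iff_eq, Perm.mul_apply, finRotate_succ_pow_apply, neg_add_cancel, hC]
  have hcast : (j : Fin (n + 1)) = j' :=
    neg_injective (by rw [← inv_apply_zero hA, ← inv_apply_zero hB, h])
  have hjj : j = j' := by
    simpa [Fin.ext_iff, Fin.val_natCast, Nat.mod_eq_of_lt (Nat.lt_succ_of_le hj),
      Nat.mod_eq_of_lt (Nat.lt_succ_of_le hj')] using hcast
  subst hjj
  exact ⟨mul_right_cancel h, rfl⟩

theorem IsHamiltonSeq.mono {n : ℕ} {R R' : Set ℕ} {S : List ℕ} (h : IsHamiltonSeq n R S)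
    (hR : R ⊆ R') : IsHamiltonSeq n R' S :=
  ⟨h.1, fun r hr => hR (h.2.1 r hr), h.2.2⟩

theorem partialProd_reuseOp_eq {n i : ℕ} {S : List ℕ} (hS : ∀ r ∈ S, 1 ≤ r ∧ r ≤ n)
    (hi : i < (n + 1) * S.length) :
    partialProd (n + 1) (reuseOp (n + 1) S) i =
      Fin.revPerm * permCastSucc n (partialProd n S (i / (n + 1))) * Fin.revPerm *
        finRotate (n + 1) ^ (i % (n + 1)) := by
  have hS' : ∀ r ∈ S, 1 ≤ r ∧ r ≤ n + 1 :=
    fun r hr => ⟨(hS r hr).1, Nat.le_succ_of_le (hS r hr).2⟩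
  rw [← partialProd_succ_of_le fun r hr => (hS r hr).2,
    ← partialProd_reuseOp hS' (Nat.div_lt_of_lt_mul hi) (Nat.le_of_lt_succ (i.mod_lt n.succ_pos)),
    Nat.div_add_mod']

theorem partialProd_reuseOp_injOn {n i i' : ℕ} {S : List ℕ} (hS : ∀ r ∈ S, 1 ≤ r ∧ r ≤ n)
    (hinj : ∀ k < S.length, ∀ k' < S.length, partialProd n S k = partialProd n S k' → k = k')
    (hi : i < (n + 1) * S.length) (hi' : i' < (n + 1) * S.length)
    (h : partialProd (n + 1) (reuseOp (n + 1) S) i =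
      partialProd (n + 1) (reuseOp (n + 1) S) i') :
    i = i' := by
  rw [partialProd_reuseOp_eq hS hi, partialProd_reuseOp_eq hS hi'] at h
  obtain ⟨hconj, hmod⟩ := eq_and_eq_of_mul_finRotate_pow_eq
    (revPerm_mul_permCastSucc_mul_revPerm_apply_zero _)
    (revPerm_mul_permCastSucc_mul_revPerm_apply_zero _)
    (Nat.le_of_lt_succ (i.mod_lt n.succ_pos)) (Nat.le_of_lt_succ (i'.mod_lt n.succ_pos)) h
  have hdiv : i / (n + 1) = i' / (n + 1) :=
    hinj _ (Nat.div_lt_of_lt_mul hi) _ (Nat.div_lt_of_lt_mul hi')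
      (permCastSucc_injective n (mul_left_cancel (mul_right_cancel hconj)))
  rw [← Nat.div_add_mod' i (n + 1), ← Nat.div_add_mod' i' (n + 1), hdiv, hmod]

theorem isHamiltonSeq_reuseOp {n : ℕ} {S : List ℕ}
    (h : IsHamiltonSeq n {r | 1 ≤ r ∧ r ≤ n} S) :
    IsHamiltonSeq (n + 1) {r | 2 ≤ r ∧ r ≤ n + 1} (reuseOp (n + 1) S) := by
  obtain ⟨hlen, hS, hinj, hprod⟩ := h
  have hbound : (n + 1).factorial = (n + 1) * S.length := by rw [hlen, Nat.factorial_succ]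
  have hrev : (Fin.revPerm : Perm (Fin (n + 1))) * Fin.revPerm = 1 := by
    rw [← mul_inv_cancel Fin.revPerm, revPerm_inv]
  refine ⟨by rw [length_reuseOp, hbound, mul_comm], fun r hr => mem_of_mem_reuseOp hS hr,
    fun i hi i' hi' =>
      partialProd_reuseOp_injOn hS (hlen ▸ hinj) (hbound ▸ hi) (hbound ▸ hi'), ?_⟩
  rw [partialProd, List.take_length,
    prod_map_sigmaRot_reuseOp fun r hr => ⟨(hS r hr).1, Nat.le_succ_of_le (hS r hr).2⟩,
    ← List.take_length (l := S), ← partialProd, partialProd_succ_of_le fun r hr => (hS r hr).2,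
    hprod, map_one, mul_one, hrev]

theorem isHamiltonSeq_corbettC {n : ℕ} (hn : 1 ≤ n) :
    IsHamiltonSeq n {r | 1 ≤ r ∧ r ≤ n} (corbettC n) := by
  induction n, hn using Nat.le_induction with
  | base => exact ⟨rfl, by simp [corbettC], by simp, by decide⟩
  | succ n hn ih =>
    obtain ⟨m, rfl⟩ := Nat.exists_eq_add_of_le' hn
    exact (isHamiltonSeq_reuseOp ih).mono fun r hr => ⟨by have := hr.1; omega, hr.2⟩

/-- Corbett. For every `n ≥ 2`, the reuse sequence `C_n` is a Hamilton
sequence for the rotator graph `PR_n = RR_n({2,…,n})`. -/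
theorem stmt4 (n : ℕ) (hn : 2 ≤ n) :
    IsHamiltonSeq n {r | 2 ≤ r ∧ r ≤ n} (corbettC n) := by
  obtain ⟨m, rfl⟩ := Nat.exists_eq_add_of_le' hn
  exact isHamiltonSeq_reuseOp (isHamiltonSeq_corbettC (Nat.le_add_left 1 m))
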